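/- For every integer k ≥ 1 there exists a finite graph G such that E(G) admits a partition into locally k-irregular parts, and every partition of E(G) into locally k-irregular parts has at least 2k+1 parts; that is, h(k) ≥ 2k+1. -/

import Mathlib

/-!
The `2k` stars centred at the vertices `centre i` of `Gadget.graph k`, together with the star at
`bottom`, form `2k + 1` locally `k`-irregular parts. Conversely, let `k ≥ 2`. A leaf has degree 1
in its part, so its centre needs degree at least `k + 1` there, which is its full degree: the whole
star at `centre i` lies in one part. In that part `top` must then have degree 1, so the `2k` stars
lie in distinct parts. An edge `mid i – bottom` cannot share a part with the edge `centre i – mid i`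
(the degrees in `{1, …, k + 1}` and `{2}` would differ by less than `k`), so `mid i` has degree 1 in
its part and `bottom` degree at least `k + 1`; as `bottom` has degree `2k`, all its edges lie in one
further part. For `k = 1` the graph is a hexagon, and a finite check shows that it has no edge
2-colouring with both colour classes locally irregular.
-/

open SimpleGraph

variable {V : Type*}

/-- The degree of a vertex `v` in an edge part `E`: the number of edges of `E` incident to `v`. -/
noncomputable def partDeg (E : Set (Sym2 V)) (v : V) : ℕ :=
  {e ∈ E | v ∈ e}.ncard

/-- A part is a matching if no two of its edges share a vertex. -/
def IsMatchingPart (E : Set (Sym2 V)) : Prop :=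
  ∀ e ∈ E, ∀ f ∈ E, e ≠ f → ∀ v : V, v ∈ e → v ∉ f

/-- A part is locally irregular if the endpoints of each of its edges have distinct degrees. -/
def IsLocallyIrregularPart (E : Set (Sym2 V)) : Prop :=
  ∀ u v : V, s(u, v) ∈ E → partDeg E u ≠ partDeg E v

/-- A part is locally regular if the endpoints of each of its edges have equal degrees. -/
def IsLocallyRegularPart (E : Set (Sym2 V)) : Prop :=
  ∀ u v : V, s(u, v) ∈ E → partDeg E u = partDeg E v

/-- A part is regular if all vertices incident to one of its edges have the same degree `r ≥ 1`. -/
def IsRegularPart (E : Set (Sym2 V)) : Prop :=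
  ∃ r : ℕ, 1 ≤ r ∧ ∀ v : V, (∃ e ∈ E, v ∈ e) → partDeg E v = r

/-- A part is `r`-regular if every vertex incident to one of its edges has degree `r` in it. -/
def IsRegularPartOfDeg (r : ℕ) (E : Set (Sym2 V)) : Prop :=
  ∀ v : V, (∃ e ∈ E, v ∈ e) → partDeg E v = r

/-- A part is locally `k`-irregular if endpoint degrees of each edge differ by at least `k`. -/
def IsLocallyKIrregularPart (k : ℕ) (E : Set (Sym2 V)) : Prop :=
  ∀ u v : V, s(u, v) ∈ E → (k : ℤ) ≤ |(partDeg E u : ℤ) - (partDeg E v : ℤ)|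

/-- The maximum degree of a finite graph. -/
noncomputable def maxDeg [Fintype V] (G : SimpleGraph V) : ℕ :=
  Finset.univ.sup fun v => partDeg G.edgeSet v

section partDeg

variable [Finite V] {E F S : Set (Sym2 V)} {e f : Sym2 V} {v : V}

theorem partDeg_le_ncard (h : {e ∈ E | v ∈ e} ⊆ S) : partDeg E v ≤ S.ncard :=
  Set.ncard_le_ncard h (Set.toFinite S)

theorem partDeg_pos (he : e ∈ E) (hv : v ∈ e) : 0 < partDeg E v :=
  (Set.ncard_pos (Set.toFinite _)).2 ⟨e, he, hv⟩

theorem two_le_partDeg (he : e ∈ E) (hf : f ∈ E) (hef : e ≠ f) (hve : v ∈ e) (hvf : v ∈ f) :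
    2 ≤ partDeg E v := by
  rw [← Set.ncard_pair hef]
  exact Set.ncard_le_ncard (Set.pair_subset ⟨he, hve⟩ ⟨hf, hvf⟩) (Set.toFinite _)

theorem subset_of_ncard_le_partDeg (h : {e ∈ E | v ∈ e} ⊆ S) (hS : S.ncard ≤ partDeg E v) :
    S ⊆ E := by
  rw [← Set.eq_of_subset_of_ncard_le h hS (Set.toFinite S)]
  exact Set.sep_subset E _

theorem partDeg_union (h : Disjoint E F) : partDeg (E ∪ F) v = partDeg E v + partDeg F v := by
  rw [partDeg, partDeg, partDeg,
    ← Set.ncard_union_eq (h.mono (Set.sep_subset _ _) (Set.sep_subset _ _))]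
  exact congrArg Set.ncard Set.sep_union

end partDeg

theorem IsLocallyKIrregularPart.add_le_or_add_le {k : ℕ} {E : Set (Sym2 V)}
    (h : IsLocallyKIrregularPart k E) {u v : V} (huv : s(u, v) ∈ E) :
    k + partDeg E v ≤ partDeg E u ∨ k + partDeg E u ≤ partDeg E v := by
  rcases le_abs.mp (h u v huv) with h' | h' <;> omega

theorem isLocallyKIrregularPart_of_forall_mem [Finite V] {k : ℕ} {E : Set (Sym2 V)} {c : V}
    (hc : ∀ e ∈ E, c ∈ e) (hdiag : ∀ e ∈ E, ¬e.IsDiag) (hk : k + 1 ≤ E.ncard) :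
    IsLocallyKIrregularPart k E := by
  have hdeg_c : partDeg E c = E.ncard := by rw [partDeg, Set.sep_eq_self_iff_mem_true.2 hc]
  have hdeg_leaf : ∀ x, s(c, x) ∈ E → partDeg E x = 1 := by
    intro x hx
    have hcx : c ≠ x := fun h => hdiag _ hx (h ▸ Sym2.mk_isDiag_iff.2 rfl)
    rw [partDeg, ← Set.ncard_singleton s(c, x)]
    congr 1
    ext e
    simp only [Set.mem_ofPred_eq, Set.mem_singleton_iff]
    exact ⟨fun ⟨he, hxe⟩ => (Sym2.mem_and_mem_iff hcx).1 ⟨hc e he, hxe⟩,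
      fun h => h ▸ ⟨hx, Sym2.mem_mk_right c x⟩⟩
  intro u v huv
  rcases Sym2.mem_iff.1 (hc _ huv) with rfl | rfl
  · rw [hdeg_c, hdeg_leaf v huv, abs_of_nonneg (by omega)]
    omega
  · rw [hdeg_c, hdeg_leaf u (Sym2.eq_swap ▸ huv), abs_of_nonpos (by omega)]
    omega

def IsLocallyKIrregularDecomposition (k : ℕ) (E : Set (Sym2 V)) {t : ℕ}
    (P : Fin t → Set (Sym2 V)) : Prop :=
  (⋃ i, P i) = E ∧ (∀ i j, i ≠ j → Disjoint (P i) (P j)) ∧ ∀ i, IsLocallyKIrregularPart k (P i)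

namespace IsLocallyKIrregularDecomposition

variable {k : ℕ} {E : Set (Sym2 V)} {t : ℕ} {P : Fin t → Set (Sym2 V)}
  (hP : IsLocallyKIrregularDecomposition k E P)
include hP

theorem subset (a : Fin t) : P a ⊆ E :=
  hP.1 ▸ Set.subset_iUnion P a

theorem exists_mem {e : Sym2 V} (he : e ∈ E) : ∃ a, e ∈ P a :=
  Set.mem_iUnion.1 (hP.1 ▸ he)

theorem disjoint {a b : Fin t} (hab : a ≠ b) : Disjoint (P a) (P b) :=
  hP.2.1 a b hab

theorem isLocallyKIrregularPart (a : Fin t) : IsLocallyKIrregularPart k (P a) :=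
  hP.2.2 a

theorem exists_irregular_and_diff_of_le_two (ht : t ≤ 2) :
    ∃ A ⊆ E, IsLocallyKIrregularPart k A ∧ IsLocallyKIrregularPart k (E \ A) := by
  have hempty : IsLocallyKIrregularPart k (∅ : Set (Sym2 V)) := fun _ _ h => h.elim
  obtain ⟨hunion, hdisj, hirr⟩ := hP
  interval_cases t
  · refine ⟨∅, Set.empty_subset _, hempty, ?_⟩
    rwa [Set.sdiff_empty, ← hunion, Set.iUnion_of_empty]
  · refine ⟨P 0, hunion ▸ Set.subset_iUnion P 0, hirr 0, ?_⟩
    rwa [← hunion, Set.sdiff_eq_empty.2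
      (Set.iUnion_subset fun i => Subsingleton.elim i 0 ▸ subset_rfl)]
  · refine ⟨P 0, hunion ▸ Set.subset_iUnion P 0, hirr 0, ?_⟩
    have hdiff : E \ P 0 = P 1 := by
      ext e
      simp only [← hunion, Set.mem_sdiff, Set.mem_iUnion, Fin.exists_fin_two]
      exact ⟨fun ⟨h, h0⟩ => h.resolve_left h0,
        fun h1 => ⟨Or.inr h1, fun h0 => Set.disjoint_left.1 (hdisj 0 1 (by decide)) h0 h1⟩⟩
    rw [hdiff]
    exact hirr 1

end IsLocallyKIrregularDecomposition

section transport

variable {W : Type*} {f : V → W} {k : ℕ}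

theorem partDeg_image_sym2Map (hf : Function.Injective f) (E : Set (Sym2 V)) (v : V) :
    partDeg (Sym2.map f '' E) (f v) = partDeg E v := by
  have hmem : ∀ g : Sym2 V, f v ∈ Sym2.map f g ↔ v ∈ g := fun g => by
    rw [Sym2.mem_map]
    exact ⟨fun ⟨a, ha, hav⟩ => hf hav ▸ ha, fun h => ⟨v, h, rfl⟩⟩
  have himage : {e ∈ Sym2.map f '' E | f v ∈ e} = Sym2.map f '' {g ∈ E | v ∈ g} := by
    ext e
    constructor
    · rintro ⟨⟨g, hg, rfl⟩, hv⟩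
      exact ⟨g, ⟨hg, (hmem g).1 hv⟩, rfl⟩
    · rintro ⟨g, ⟨hg, hv⟩, rfl⟩
      exact ⟨⟨g, hg, rfl⟩, (hmem g).2 hv⟩
  rw [partDeg, himage, Set.ncard_image_of_injective _ (Sym2.map.injective hf), partDeg]

theorem IsLocallyKIrregularPart.image_sym2Map (hf : Function.Injective f) {E : Set (Sym2 V)}
    (h : IsLocallyKIrregularPart k E) : IsLocallyKIrregularPart k (Sym2.map f '' E) := by
  rintro a b ⟨g, hg, hgab⟩
  induction g using Sym2.ind with
  | _ x y =>
    rw [Sym2.map_mk, Sym2.eq_iff] at hgab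
    rcases hgab with ⟨rfl, rfl⟩ | ⟨rfl, rfl⟩
    · rw [partDeg_image_sym2Map hf, partDeg_image_sym2Map hf]
      exact h x y hg
    · rw [partDeg_image_sym2Map hf, partDeg_image_sym2Map hf, abs_sub_comm]
      exact h x y hg

theorem IsLocallyKIrregularDecomposition.image_sym2Map (hf : Function.Injective f)
    {E : Set (Sym2 V)} {t : ℕ} {P : Fin t → Set (Sym2 V)}
    (hP : IsLocallyKIrregularDecomposition k E P) :
    IsLocallyKIrregularDecomposition k (Sym2.map f '' E) fun i => Sym2.map f '' P i := by
  obtain ⟨hunion, hdisj, hirr⟩ := hP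
  refine ⟨by rw [← Set.image_iUnion, hunion], fun i j hij => ?_, fun i => (hirr i).image_sym2Map hf⟩
  exact (Set.disjoint_image_iff (Sym2.map.injective hf)).2 (hdisj i j hij)

theorem exists_fin_graph_of_isLocallyKIrregularDecomposition [Fintype V] (H : SimpleGraph V)
    (k m : ℕ) (hexists : ∃ (t : ℕ) (P : Fin t → Set (Sym2 V)),
      IsLocallyKIrregularDecomposition k H.edgeSet P)
    (hbound : ∀ (t : ℕ) (P : Fin t → Set (Sym2 V)),
      IsLocallyKIrregularDecomposition k H.edgeSet P → m ≤ t) :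
    ∃ (n : ℕ) (G : SimpleGraph (Fin n)),
      (∃ (t : ℕ) (P : Fin t → Set (Sym2 (Fin n))), IsLocallyKIrregularDecomposition k G.edgeSet P) ∧
      ∀ (t : ℕ) (P : Fin t → Set (Sym2 (Fin n))),
        IsLocallyKIrregularDecomposition k G.edgeSet P → m ≤ t := by
  let φ := Fintype.equivFin V
  have hG : (H.map φ.toEmbedding).edgeSet = Sym2.map φ '' H.edgeSet := H.edgeSet_map _
  refine ⟨_, H.map φ.toEmbedding, ?_, fun t P hP => hbound t (fun i => Sym2.map φ.symm '' P i) ?_⟩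
  · obtain ⟨t, P, hP⟩ := hexists
    exact ⟨t, _, hG ▸ hP.image_sym2Map φ.injective⟩
  · have hback : Sym2.map φ.symm '' (Sym2.map φ '' H.edgeSet) = H.edgeSet := by
      rw [Set.image_image]
      simp [Sym2.map_map]
    exact hback ▸ (hG ▸ hP).image_sym2Map φ.symm.injective

end transport


namespace Gadget

/-- Vertices of the extremal graph: `top` is joined to `2k` centres; centre `i` carries `k - 1`
pendant leaves and is joined through `mid i` to the common vertex `bottom`. -/
inductive Vert (k : ℕ) where
  | top
  | centre (i : Fin (2 * k))
  | leaf (i : Fin (2 * k)) (s : Fin (k - 1))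
  | mid (i : Fin (2 * k))
  | bottom
  deriving DecidableEq, Fintype

open Vert

variable (k : ℕ)

def star (i : Fin (2 * k)) : Set (Sym2 (Vert k)) :=
  insert s(top, centre i) (insert s(centre i, mid i) (Set.range fun s => s(centre i, leaf i s)))

def bottomStar : Set (Sym2 (Vert k)) :=
  Set.range fun i => s(mid i, bottom)

def edges : Set (Sym2 (Vert k)) :=
  (⋃ i, star k i) ∪ bottomStar k

def graph : SimpleGraph (Vert k) :=
  SimpleGraph.fromEdgeSet (edges k)

variable {k} {i j : Fin (2 * k)} {e : Sym2 (Vert k)}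

theorem mem_star :
    e ∈ star k i ↔ e = s(top, centre i) ∨ e = s(centre i, mid i) ∨
      ∃ s, e = s(centre i, leaf i s) := by
  simp [star, eq_comm]

theorem mem_bottomStar : e ∈ bottomStar k ↔ ∃ i, e = s(mid i, bottom) := by
  simp [bottomStar, eq_comm]

theorem mem_edges :
    e ∈ edges k ↔ (∃ i, e = s(top, centre i)) ∨ (∃ i, e = s(centre i, mid i)) ∨
      (∃ i s, e = s(centre i, leaf i s)) ∨ ∃ i, e = s(mid i, bottom) := by
  simp only [edges, Set.mem_union, Set.mem_iUnion, mem_star, mem_bottomStar]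
  constructor
  · rintro (⟨i, h | h | ⟨s, h⟩⟩ | h)
    exacts [Or.inl ⟨i, h⟩, Or.inr (Or.inl ⟨i, h⟩), Or.inr (Or.inr (Or.inl ⟨i, s, h⟩)),
      Or.inr (Or.inr (Or.inr h))]
  · rintro (⟨i, h⟩ | ⟨i, h⟩ | ⟨i, s, h⟩ | h)
    exacts [Or.inl ⟨i, Or.inl h⟩, Or.inl ⟨i, Or.inr (Or.inl h)⟩, Or.inl ⟨i, Or.inr (Or.inr ⟨s, h⟩)⟩,
      Or.inr h]

theorem not_isDiag_of_mem_edges (he : e ∈ edges k) : ¬e.IsDiag := by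
  obtain ⟨i, rfl⟩ | ⟨i, rfl⟩ | ⟨i, s, rfl⟩ | ⟨i, rfl⟩ := mem_edges.1 he <;> simp

theorem edgeSet_graph : (graph k).edgeSet = edges k := by
  rw [graph, SimpleGraph.edgeSet_fromEdgeSet, sdiff_eq_left, Set.disjoint_right]
  exact fun _ hdiag he => not_isDiag_of_mem_edges he hdiag

theorem star_subset_edges : star k i ⊆ edges k :=
  fun _ he => Or.inl (Set.mem_iUnion.2 ⟨i, he⟩)

theorem bottomStar_subset_edges : bottomStar k ⊆ edges k :=
  fun _ he => Or.inr he

theorem ncard_star (hk : 1 ≤ k) : (star k i).ncard = k + 1 := by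
  have hleaves : (Set.range fun s : Fin (k - 1) => s(centre i, leaf i s)).ncard = k - 1 := by
    rw [Set.ncard_range_of_injective (fun a b h => by simpa using h), Nat.card_eq_fintype_card,
      Fintype.card_fin]
  rw [star, Set.ncard_insert_of_notMem (by simp), Set.ncard_insert_of_notMem (by simp), hleaves]
  omega

theorem ncard_bottomStar : (bottomStar k).ncard = 2 * k := by
  rw [bottomStar, Set.ncard_range_of_injective (fun a b h => by simpa using h),
    Nat.card_eq_fintype_card, Fintype.card_fin]

theorem centre_mem_of_mem_star (he : e ∈ star k i) : centre i ∈ e := by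
  rcases mem_star.1 he with rfl | rfl | ⟨s, rfl⟩ <;> simp

theorem bottom_mem_of_mem_bottomStar (he : e ∈ bottomStar k) : bottom ∈ e := by
  obtain ⟨i, rfl⟩ := mem_bottomStar.1 he
  simp

theorem disjoint_star (hij : i ≠ j) : Disjoint (star k i) (star k j) := by
  refine Set.disjoint_left.2 fun e hi hj => ?_
  rcases mem_star.1 hi with rfl | rfl | ⟨s, rfl⟩ <;>
    simpa [Ne.symm hij] using centre_mem_of_mem_star hj

theorem disjoint_star_bottomStar : Disjoint (star k i) (bottomStar k) := by
  refine Set.disjoint_left.2 fun e hi hb => ?_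
  rcases mem_star.1 hi with rfl | rfl | ⟨s, rfl⟩ <;> simpa using bottom_mem_of_mem_bottomStar hb

theorem isLocallyKIrregularPart_star (hk : 1 ≤ k) (i : Fin (2 * k)) :
    IsLocallyKIrregularPart k (star k i) :=
  isLocallyKIrregularPart_of_forall_mem (fun _ => centre_mem_of_mem_star)
    (fun _ he => not_isDiag_of_mem_edges (star_subset_edges he)) (ncard_star hk).ge

theorem isLocallyKIrregularPart_bottomStar (hk : 1 ≤ k) :
    IsLocallyKIrregularPart k (bottomStar k) :=
  isLocallyKIrregularPart_of_forall_mem (fun _ => bottom_mem_of_mem_bottomStar)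
    (fun _ he => not_isDiag_of_mem_edges (bottomStar_subset_edges he))
    (by rw [ncard_bottomStar]; omega)

theorem isLocallyKIrregularDecomposition_stars (hk : 1 ≤ k) :
    IsLocallyKIrregularDecomposition k (edges k)
      (Fin.snoc (α := fun _ => Set (Sym2 (Vert k))) (star k) (bottomStar k)) := by
  refine ⟨?_, fun a b hab => ?_, fun a => ?_⟩
  · ext e
    simp [edges]
  · induction a using Fin.lastCases <;> induction b using Fin.lastCases
    · exact absurd rfl hab
    · simpa using disjoint_star_bottomStar.symm
    · simpa using disjoint_star_bottomStar
    · simpa using disjoint_star (fun h => hab (congrArg Fin.castSucc h))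
  · induction a using Fin.lastCases
    · simpa using isLocallyKIrregularPart_bottomStar hk
    · simpa using isLocallyKIrregularPart_star hk _

section degrees

variable {E : Set (Sym2 (Vert k))} (hE : E ⊆ edges k)
include hE

theorem partDeg_top_le : partDeg E top ≤ 2 * k := by
  have hinc : {e ∈ E | top ∈ e} ⊆ Set.range fun i => s(top, centre i) := by
    rintro e ⟨he, hv⟩
    obtain ⟨i, rfl⟩ | ⟨i, rfl⟩ | ⟨i, s, rfl⟩ | ⟨i, rfl⟩ := mem_edges.1 (hE he) <;> simp_all
  refine (partDeg_le_ncard hinc).trans_eq ?_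
  rw [Set.ncard_range_of_injective (fun a b h => by simpa using h), Nat.card_eq_fintype_card,
    Fintype.card_fin]

theorem partDeg_centre_le (hk : 1 ≤ k) : partDeg E (centre i) ≤ k + 1 := by
  have hinc : {e ∈ E | centre i ∈ e} ⊆ star k i := by
    rintro e ⟨he, hv⟩
    obtain ⟨j, rfl⟩ | ⟨j, rfl⟩ | ⟨j, s, rfl⟩ | ⟨j, rfl⟩ := mem_edges.1 (hE he) <;>
      simp_all [mem_star]
  exact (partDeg_le_ncard hinc).trans_eq (ncard_star hk)

theorem partDeg_leaf_le {s : Fin (k - 1)} : partDeg E (leaf i s) ≤ 1 := by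
  have hinc : {e ∈ E | leaf i s ∈ e} ⊆ {s(centre i, leaf i s)} := by
    rintro e ⟨he, hv⟩
    obtain ⟨j, rfl⟩ | ⟨j, rfl⟩ | ⟨j, s, rfl⟩ | ⟨j, rfl⟩ := mem_edges.1 (hE he) <;> simp_all
  exact (partDeg_le_ncard hinc).trans_eq (Set.ncard_singleton _)

theorem partDeg_mid_le : partDeg E (mid i) ≤ 2 := by
  have hinc : {e ∈ E | mid i ∈ e} ⊆ {s(centre i, mid i), s(mid i, bottom)} := by
    rintro e ⟨he, hv⟩
    obtain ⟨j, rfl⟩ | ⟨j, rfl⟩ | ⟨j, s, rfl⟩ | ⟨j, rfl⟩ := mem_edges.1 (hE he) <;> simp_all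
  exact (partDeg_le_ncard hinc).trans_eq (Set.ncard_pair (by simp))

theorem partDeg_mid_le_one_of_notMem (h : s(centre i, mid i) ∉ E) : partDeg E (mid i) ≤ 1 := by
  have hinc : {e ∈ E | mid i ∈ e} ⊆ {s(mid i, bottom)} := by
    rintro e ⟨he, hv⟩
    obtain ⟨j, rfl⟩ | ⟨j, rfl⟩ | ⟨j, s, rfl⟩ | ⟨j, rfl⟩ := mem_edges.1 (hE he) <;> simp_all
  exact (partDeg_le_ncard hinc).trans_eq (Set.ncard_singleton _)

theorem partDeg_bottom_le : partDeg E bottom ≤ 2 * k := by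
  have hinc : {e ∈ E | bottom ∈ e} ⊆ bottomStar k := by
    rintro e ⟨he, hv⟩
    obtain ⟨j, rfl⟩ | ⟨j, rfl⟩ | ⟨j, s, rfl⟩ | ⟨j, rfl⟩ := mem_edges.1 (hE he) <;>
      simp_all [mem_bottomStar]
  exact (partDeg_le_ncard hinc).trans_eq ncard_bottomStar

end degrees

section irregular

variable {E : Set (Sym2 (Vert k))} (hE : E ⊆ edges k) (hirr : IsLocallyKIrregularPart k E)
include hE hirr

theorem star_subset_of_leaf_mem (hk : 1 ≤ k) {s : Fin (k - 1)}
    (h : s(centre i, leaf i s) ∈ E) : star k i ⊆ E := by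
  have hcentre_pos := partDeg_pos (v := centre i) h (by simp)
  have hleaf_pos := partDeg_pos (v := leaf i s) h (by simp)
  have hleaf_le := partDeg_leaf_le hE (i := i) (s := s)
  refine subset_of_ncard_le_partDeg (v := centre i) ?_ ?_
  · rintro e ⟨he, hv⟩
    obtain ⟨j, rfl⟩ | ⟨j, rfl⟩ | ⟨j, s, rfl⟩ | ⟨j, rfl⟩ := mem_edges.1 (hE he) <;>
      simp_all [mem_star]
  · rw [ncard_star hk]
    rcases hirr.add_le_or_add_le h with h' | h' <;> omega

theorem eq_of_star_subset (hk : 1 ≤ k) (hstar : star k i ⊆ E) (hj : s(top, centre j) ∈ E) :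
    j = i := by
  have hcentre : k + 1 ≤ partDeg E (centre i) := by
    rw [← ncard_star hk]
    exact Set.ncard_le_ncard (fun e he => ⟨hstar he, centre_mem_of_mem_star he⟩) (Set.toFinite _)
  have hi : s(top, centre i) ∈ E := hstar (mem_star.2 (Or.inl rfl))
  have htop : partDeg E top ≤ 1 := by
    have htop_le := partDeg_top_le hE
    have hcentre_le := partDeg_centre_le hE (i := i) hk
    rcases hirr.add_le_or_add_le hi with h' | h' <;> omega
  by_contra hji
  have htop_two := two_le_partDeg hj hi (by simpa using hji) (Sym2.mem_mk_left _ _)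
    (Sym2.mem_mk_left _ _)
  omega

theorem centre_mid_notMem (hk : 2 ≤ k) (h : s(mid i, bottom) ∈ E) :
    s(centre i, mid i) ∉ E := by
  intro hcm
  have hcentre_pos := partDeg_pos (v := centre i) hcm (by simp)
  have hcentre_le := partDeg_centre_le hE (i := i) (by omega)
  have hmid_two := two_le_partDeg hcm h (by simp) (Sym2.mem_mk_right _ _) (Sym2.mem_mk_left _ _)
  have hmid_le := partDeg_mid_le hE (i := i)
  rcases hirr.add_le_or_add_le hcm with h' | h' <;> omega

theorem add_one_le_partDeg_bottom (hk : 2 ≤ k) (h : s(mid i, bottom) ∈ E) :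
    k + 1 ≤ partDeg E bottom := by
  have hmid_le := partDeg_mid_le_one_of_notMem hE (centre_mid_notMem hE hirr hk h)
  have hmid_pos := partDeg_pos (v := mid i) h (by simp)
  rcases hirr.add_le_or_add_le h with h' | h' <;> omega

end irregular

section decomposition

open Finset

variable {t : ℕ} {P : Fin t → Set (Sym2 (Vert k))}
  (hP : IsLocallyKIrregularDecomposition k (edges k) P)
include hP

theorem eq_of_mid_bottom_mem (hk : 2 ≤ k) {i j : Fin (2 * k)} {a b : Fin t}
    (ha : s(mid i, bottom) ∈ P a) (hb : s(mid j, bottom) ∈ P b) : a = b := by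
  by_contra hab
  have hdeg_a := add_one_le_partDeg_bottom (hP.subset a) (hP.isLocallyKIrregularPart a) hk ha
  have hdeg_b := add_one_le_partDeg_bottom (hP.subset b) (hP.isLocallyKIrregularPart b) hk hb
  have hunion := partDeg_union (v := bottom) (hP.disjoint hab)
  have hbound := partDeg_bottom_le (Set.union_subset (hP.subset a) (hP.subset b))
  omega

theorem two_mul_add_one_le_of_two_le (hk : 2 ≤ k) : 2 * k + 1 ≤ t := by
  choose R hR using fun i => hP.exists_mem
    (star_subset_edges (i := i) (mem_star.2 (Or.inr (Or.inr ⟨⟨0, by omega⟩, rfl⟩))))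
  have hstar (i) : star k i ⊆ P (R i) :=
    star_subset_of_leaf_mem (hP.subset _) (hP.isLocallyKIrregularPart _) (by omega) (hR i)
  have hR_inj : Function.Injective R := fun a b hab =>
    eq_of_star_subset (hP.subset _) (hP.isLocallyKIrregularPart _) (by omega) (hstar b)
      (hab ▸ hstar a (mem_star.2 (Or.inl rfl)))
  obtain ⟨Z, hZ⟩ := hP.exists_mem (bottomStar_subset_edges (mem_bottomStar.2 ⟨⟨0, by omega⟩, rfl⟩))
  have hZ_ne (i) : R i ≠ Z := by
    intro hRZ
    obtain ⟨b, hb⟩ := hP.exists_mem (bottomStar_subset_edges (mem_bottomStar.2 ⟨i, rfl⟩))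
    rw [eq_of_mid_bottom_mem hP hk hb hZ] at hb
    exact centre_mid_notMem (hP.subset Z) (hP.isLocallyKIrregularPart Z) hk hb
      (hRZ ▸ hstar i (mem_star.2 (Or.inr (Or.inl rfl))))
  calc 2 * k + 1 = #(insert Z (univ.image R)) := by
        rw [card_insert_of_notMem (by simpa using hZ_ne), card_image_of_injective _ hR_inj,
          card_univ, Fintype.card_fin]
    _ ≤ t := (card_le_univ _).trans_eq (Fintype.card_fin t)

end decomposition

section hexagon

open Finset

/-- Degree of `v` in a set `A` of edges of the hexagon on `Fin 6`, whose edge `j` joins `j` and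
`j + 1`. -/
def hexDeg (A : Finset (Fin 6)) (v : Fin 6) : ℕ :=
  #{j ∈ A | j = v ∨ j + 1 = v}

def IsIrregularHexPart (A : Finset (Fin 6)) : Prop :=
  ∀ j ∈ A, hexDeg A j ≠ hexDeg A (j + 1)

theorem not_isIrregularHexPart_and_compl (A : Finset (Fin 6)) :
    ¬(IsIrregularHexPart A ∧ IsIrregularHexPart Aᶜ) := by
  unfold IsIrregularHexPart
  revert A
  decide

/-- For `k = 1` there are no leaves and the graph is the hexagon traversed by `hex`. -/
def hex : Fin 6 → Vert 1 :=
  ![top, centre 0, mid 0, bottom, mid 1, centre 1]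

def hexEdge (j : Fin 6) : Sym2 (Vert 1) :=
  s(hex j, hex (j + 1))

theorem hexEdge_injective : Function.Injective hexEdge := by
  decide

theorem hex_mem_hexEdge_iff : ∀ v j, hex v ∈ hexEdge j ↔ j = v ∨ j + 1 = v := by
  decide

theorem range_hexEdge : Set.range hexEdge = edges 1 := by
  ext e
  rw [mem_edges]
  constructor
  · rintro ⟨j, rfl⟩
    fin_cases j
    exacts [Or.inl ⟨0, rfl⟩, Or.inr (Or.inl ⟨0, rfl⟩), Or.inr (Or.inr (Or.inr ⟨0, rfl⟩)),
      Or.inr (Or.inr (Or.inr ⟨1, Sym2.eq_swap⟩)), Or.inr (Or.inl ⟨1, Sym2.eq_swap⟩),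
      Or.inl ⟨1, Sym2.eq_swap⟩]
  · rintro (⟨i, rfl⟩ | ⟨i, rfl⟩ | ⟨i, s, rfl⟩ | ⟨i, rfl⟩)
    · fin_cases i
      exacts [⟨0, rfl⟩, ⟨5, Sym2.eq_swap⟩]
    · fin_cases i
      exacts [⟨1, rfl⟩, ⟨4, Sym2.eq_swap⟩]
    · exact s.elim0
    · fin_cases i
      exacts [⟨2, rfl⟩, ⟨3, Sym2.eq_swap⟩]

section hexLabels

variable {E : Set (Sym2 (Vert 1))} {A : Finset (Fin 6)} (hE : E ⊆ edges 1)
  (hA : ∀ j, j ∈ A ↔ hexEdge j ∈ E)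
include hE hA

theorem partDeg_hex (v : Fin 6) : partDeg E (hex v) = hexDeg A v := by
  have himage : {e ∈ E | hex v ∈ e} = hexEdge '' ↑{j ∈ A | j = v ∨ j + 1 = v} := by
    ext e
    constructor
    · rintro ⟨he, hv⟩
      obtain ⟨j, rfl⟩ := range_hexEdge ▸ hE he
      exact ⟨j, by simpa [hA] using ⟨he, (hex_mem_hexEdge_iff v j).1 hv⟩, rfl⟩
    · rintro ⟨j, hj, rfl⟩
      simp only [coe_filter, Set.mem_ofPred_eq, hA] at hj
      exact ⟨hj.1, (hex_mem_hexEdge_iff v j).2 hj.2⟩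
  rw [partDeg, himage, Set.ncard_image_of_injective _ hexEdge_injective, Set.ncard_coe_finset,
    hexDeg]

theorem isIrregularHexPart (hirr : IsLocallyKIrregularPart 1 E) : IsIrregularHexPart A := by
  intro j hj hdeg
  have := hirr _ _ ((hA j).1 hj)
  rw [partDeg_hex hE hA, partDeg_hex hE hA, hdeg, sub_self, abs_zero] at this
  exact absurd this (by norm_num)

end hexLabels

theorem three_le_of_one {t : ℕ} {P : Fin t → Set (Sym2 (Vert 1))}
    (hP : IsLocallyKIrregularDecomposition 1 (edges 1) P) : 3 ≤ t := by
  classical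
  by_contra! ht
  obtain ⟨E, hE, hirr, hirr_diff⟩ := hP.exists_irregular_and_diff_of_le_two (by omega)
  let A : Finset (Fin 6) := {j | hexEdge j ∈ E}
  have hA (j) : j ∈ A ↔ hexEdge j ∈ E := by simp [A]
  have hAc (j) : j ∈ Aᶜ ↔ hexEdge j ∈ edges 1 \ E := by
    simp [A, ← range_hexEdge]
  exact not_isIrregularHexPart_and_compl A
    ⟨isIrregularHexPart hE hA hirr, isIrregularHexPart Set.sdiff_subset hAc hirr_diff⟩

end hexagon

theorem two_mul_add_one_le {t : ℕ} {P : Fin t → Set (Sym2 (Vert k))} (hk : 1 ≤ k)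
    (hP : IsLocallyKIrregularDecomposition k (edges k) P) : 2 * k + 1 ≤ t := by
  obtain rfl | hk := hk.eq_or_lt
  · exact three_le_of_one hP
  · exact two_mul_add_one_le_of_two_le hP hk

end Gadget

/-- there is a finite graph, decomposable into locally k-irregular parts, every
such decomposition of which has at least 2k+1 parts; hence h(k) ≥ 2k+1. -/
theorem stmt_13 (k : ℕ) (hk : 1 ≤ k) :
    ∃ (n : ℕ) (G : SimpleGraph (Fin n)),
      (∃ (t : ℕ) (P : Fin t → Set (Sym2 (Fin n))),
        (⋃ i, P i) = G.edgeSet ∧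
        (∀ i j, i ≠ j → Disjoint (P i) (P j)) ∧
        ∀ i, IsLocallyKIrregularPart k (P i)) ∧
      ∀ (t : ℕ) (P : Fin t → Set (Sym2 (Fin n))),
        (⋃ i, P i) = G.edgeSet →
        (∀ i j, i ≠ j → Disjoint (P i) (P j)) →
        (∀ i, IsLocallyKIrregularPart k (P i)) →
        2 * k + 1 ≤ t := by
  obtain ⟨n, G, hexists, hbound⟩ :=
    exists_fin_graph_of_isLocallyKIrregularDecomposition (Gadget.graph k) k (2 * k + 1)
      ⟨_, _, Gadget.edgeSet_graph ▸ Gadget.isLocallyKIrregularDecomposition_stars hk⟩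
      fun _ _ hP => Gadget.two_mul_add_one_le hk (Gadget.edgeSet_graph ▸ hP)
  exact ⟨n, G, hexists, fun t P hunion hdisj hirr => hbound t P ⟨hunion, hdisj, hirr⟩⟩
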